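/- arXiv:1610.08405 — 2 statements merged into one kernel-verified Lean document; each statement's English description precedes it below -/
import Mathlib

section
/- Let (X, d) be a Polish space, p ∈ [1, ∞), and let μ and ν be probability measures on X with finite p-th moments. Let X₁, …, Xₙ be i.i.d. with law μ and Y₁, …, Yₙ be i.i.d. with law ν, with the two samples independent of each other, and let μₙ and νₙ be the corresponding empirical measures. Then W_p^p(μ, ν) ≤ E [W_p^p(μₙ, νₙ)]. -/
open MeasureTheory ProbabilityTheory ENNReal

noncomputable section

/-- A coupling of two measures: a measure on the product with the given marginals. -/
def IsCoupling {X : Type*} [MeasurableSpace X] (γ : Measure (X × X)) (μ ν : Measure X) : Prop :=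
  γ.map Prod.fst = μ ∧ γ.map Prod.snd = ν

/-- Wasserstein-p distance (as an extended nonneg real): infimum over couplings. -/
def wassersteinEnn {X : Type*} [MeasurableSpace X] [PseudoEMetricSpace X]
    (p : ℝ) (μ ν : Measure X) : ℝ≥0∞ :=
  ⨅ (γ : Measure (X × X)) (_ : IsCoupling γ μ ν),
    (∫⁻ z, edist z.1 z.2 ^ p ∂γ) ^ (1 / p)

/-- Wasserstein-p distance as a real number. -/
def wasserstein {X : Type*} [MeasurableSpace X] [PseudoEMetricSpace X]
    (p : ℝ) (μ ν : Measure X) : ℝ :=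
  (wassersteinEnn p μ ν).toReal
/-- The empirical measure of n sample points: (1/n) ∑ δ_{xᵢ}. -/
def empiricalMeasure {X : Type*} [MeasurableSpace X] (n : ℕ) (x : Fin n → X) : Measure X :=
  (n : ℝ≥0∞)⁻¹ • ∑ i, Measure.dirac (x i)

/-!
For a fixed outcome, W_p^p(μₙ, νₙ) is the cost of an optimal matching of the two samples: a
coupling of two n-point empirical measures, spread evenly over repeated sample points, is a
doubly stochastic matrix, and by Birkhoff's theorem a linear cost on such matrices is minimised at
a permutation matrix. Choose an optimal permutation σ(ω) measurably in ω and average the laws of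
the pairs (Y i, Z (σ(ω) i)) over i and ω. The first marginal is the average of the laws of the
Y i, i.e. μ; on each event {σ(ω) = σ} the second marginal only sees the Z i reindexed by σ, so it
is ν. The cost of this coupling of μ and ν is E[W_p^p(μₙ, νₙ)].
-/

open Finset

def transportCost {X : Type*} [MeasurableSpace X] (c : X × X → ℝ≥0∞) (μ ν : Measure X) : ℝ≥0∞ :=
  ⨅ (γ : Measure (X × X)) (_ : IsCoupling γ μ ν), ∫⁻ z, c z ∂γ

def matchingCost {X : Type*} (c : X × X → ℝ≥0∞) {n : ℕ} (x y : Fin n → X) : ℝ≥0∞ :=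
  ⨅ σ : Equiv.Perm (Fin n), (n : ℝ≥0∞)⁻¹ * ∑ i, c (x i, y (σ i))

def matchingCoupling {X : Type*} [MeasurableSpace X] {n : ℕ} (x y : Fin n → X)
    (σ : Equiv.Perm (Fin n)) : Measure (X × X) :=
  (n : ℝ≥0∞)⁻¹ • ∑ i, Measure.dirac (x i, y (σ i))

/-- `Q σ` is the sampling measure restricted to the event on which the samples are matched
along `σ`. -/
def randomMatchingCoupling {Ω X : Type*} [MeasurableSpace Ω] [MeasurableSpace X] {n : ℕ}
    (Q : Equiv.Perm (Fin n) → Measure Ω) (Y Z : Fin n → Ω → X) : Measure (X × X) :=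
  ∑ σ, (n : ℝ≥0∞)⁻¹ • ∑ i, (Q σ).map fun ω => (Y i ω, Z (σ i) ω)

section Matching

variable {ι α β K : Type*} [Fintype ι] [DecidableEq α] [DecidableEq β]

theorem sum_div_card_fiber [Semifield K] [CharZero K] (g : ι → α) (f : α → K) :
    ∑ i, f (g i) / #{j | g j = g i} = ∑ a ∈ univ.image g, f a := by
  rw [Finset.sum_comp (fun a => f a / #{j | g j = a}) g]
  refine sum_congr rfl fun a ha => ?_
  obtain ⟨i, -, rfl⟩ := mem_image.1 ha
  have : (#{j | g j = g i} : K) ≠ 0 := Nat.cast_ne_zero.2 (card_ne_zero.2 ⟨i, by simp⟩)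
  rw [nsmul_eq_mul, mul_div_cancel₀ _ this]

theorem sum_div_card_mul_card_eq_one [Semifield K] [CharZero K] {κ : Type*} [Fintype κ]
    (x : ι → α) (y : κ → β) (q : α → β → K) (i : ι)
    (hrow : ∑ b ∈ univ.image y, q (x i) b = #{i' | x i' = x i}) :
    ∑ j, q (x i) (y j) / (#{i' | x i' = x i} * #{j' | y j' = y j}) = 1 := by
  have : (#{i' | x i' = x i} : K) ≠ 0 := Nat.cast_ne_zero.2 (card_ne_zero.2 ⟨i, by simp⟩)
  simp_rw [mul_comm (#{i' | x i' = x i} : K), ← div_div, ← sum_div, sum_div_card_fiber y (q (x i)),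
    hrow, div_self this]

variable [Field K] [LinearOrder K] [IsStrictOrderedRing K] [DecidableEq ι]

theorem exists_perm_sum_le_of_mem_doublyStochastic (D M : Matrix ι ι K)
    (hM : M ∈ doublyStochastic K ι) :
    ∃ σ : Equiv.Perm ι, ∑ i, D i (σ i) ≤ ∑ i, ∑ j, D i j * M i j := by
  let cost : Matrix ι ι K →ₗ[K] K :=
    { toFun := fun N => ∑ i, ∑ j, D i j * N i j
      map_add' := fun N N' => by simp only [Matrix.add_apply, mul_add, sum_add_distrib]
      map_smul' := fun r N => by
        simp only [Matrix.smul_apply, smul_eq_mul, mul_sum, RingHom.id_apply, mul_left_comm] }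
  rw [← SetLike.mem_coe, doublyStochastic_eq_convexHull_permMatrix] at hM
  obtain ⟨_, ⟨σ, rfl⟩, hσ⟩ :=
    (cost.concaveOn convex_univ).exists_le_of_mem_convexHull (Set.subset_univ _) hM
  refine ⟨σ, le_of_eq_of_le ?_ hσ⟩
  simp [cost, Equiv.Perm.permMatrix, PEquiv.toMatrix_apply, Equiv.toPEquiv_apply]

theorem exists_perm_sum_le_of_marginals (x : ι → α) (y : ι → β) (q : α → β → K)
    (hq : ∀ a b, 0 ≤ q a b)
    (hrow : ∀ i, ∑ b ∈ univ.image y, q (x i) b = #{i' | x i' = x i})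
    (hcol : ∀ j, ∑ a ∈ univ.image x, q a (y j) = #{j' | y j' = y j}) (C : α → β → K) :
    ∃ σ : Equiv.Perm ι, ∑ i, C (x i) (y (σ i)) ≤
      ∑ a ∈ univ.image x, ∑ b ∈ univ.image y, C a b * q a b := by
  -- `q a b` spread evenly over the index pairs `(i, j)` with `x i = a` and `y j = b`
  set M : Matrix ι ι K := fun i j => q (x i) (y j) / (#{i' | x i' = x i} * #{j' | y j' = y j})
  have hM : M ∈ doublyStochastic K ι := by
    refine mem_doublyStochastic_iff_sum.2 ⟨fun i j => div_nonneg (hq _ _) (by positivity),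
      fun i => sum_div_card_mul_card_eq_one x y q i (hrow i), fun j => ?_⟩
    simpa only [M, mul_comm] using sum_div_card_mul_card_eq_one y x (fun b a => q a b) j (hcol j)
  obtain ⟨σ, hσ⟩ := exists_perm_sum_le_of_mem_doublyStochastic (fun i j => C (x i) (y j)) M hM
  refine ⟨σ, hσ.trans_eq ?_⟩
  have hinner : ∀ i, ∑ j, C (x i) (y j) * M i j =
      (∑ b ∈ univ.image y, C (x i) b * q (x i) b) / #{i' | x i' = x i} := fun i => by
    simp_rw [M, mul_div_assoc', mul_comm (#{i' | x i' = x i} : K), ← div_div, ← sum_div,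
      sum_div_card_fiber y (fun b => C (x i) b * q (x i) b)]
  rw [sum_congr rfl fun i _ => hinner i]
  exact sum_div_card_fiber x (fun a => ∑ b ∈ univ.image y, C a b * q a b)

end Matching

theorem transportCost_le_lintegral {X : Type*} [MeasurableSpace X] {c : X × X → ℝ≥0∞}
    {γ : Measure (X × X)} {μ ν : Measure X} (h : IsCoupling γ μ ν) :
    transportCost c μ ν ≤ ∫⁻ z, c z ∂γ :=
  iInf₂_le γ h

theorem matchingCost_le_sum {X : Type*} (c : X × X → ℝ≥0∞) {n : ℕ} (x y : Fin n → X) :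
    matchingCost c x y ≤ (n : ℝ≥0∞)⁻¹ * ∑ i, c (x i, y i) :=
  iInf_le _ 1

theorem wassersteinEnn_rpow {X : Type*} [MeasurableSpace X] [PseudoEMetricSpace X] {p : ℝ}
    (hp : 0 < p) (μ ν : Measure X) :
    wassersteinEnn p μ ν ^ p = transportCost (fun z => edist z.1 z.2 ^ p) μ ν := by
  change orderIsoRpow p hp _ = _
  simp only [wassersteinEnn, transportCost, OrderIso.map_iInf, orderIsoRpow_apply, ← rpow_mul,
    one_div_mul_cancel hp.ne', rpow_one]

section Coupling

variable {X : Type*} [MeasurableSpace X] {γ : Measure (X × X)} {μ ν : Measure X}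

theorem IsCoupling.swap (h : IsCoupling γ μ ν) : IsCoupling (γ.map Prod.swap) ν μ := by
  simp only [IsCoupling, Measure.map_map measurable_fst measurable_swap,
    Measure.map_map measurable_snd measurable_swap]
  exact ⟨h.2, h.1⟩

theorem IsCoupling.isProbabilityMeasure [IsProbabilityMeasure μ] (h : IsCoupling γ μ ν) :
    IsProbabilityMeasure γ :=
  ⟨by rw [← Set.preimage_univ (f := Prod.fst), ← Measure.map_apply measurable_fst .univ, h.1,
    measure_univ]⟩

end Coupling

section Empirical

variable {X : Type*} [MeasurableSpace X] {n : ℕ}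

open scoped Classical in
theorem empiricalMeasure_apply (x : Fin n → X) {B : Set X} (hB : MeasurableSet B) :
    empiricalMeasure n x B = (n : ℝ≥0∞)⁻¹ * #{i | x i ∈ B} := by
  simp [empiricalMeasure, Measure.dirac_apply' _ hB, Set.indicator_apply, Finset.sum_boole]

theorem isProbabilityMeasure_empiricalMeasure (hn : 0 < n) (x : Fin n → X) :
    IsProbabilityMeasure (empiricalMeasure n x) :=
  ⟨by
    rw [empiricalMeasure_apply x .univ]
    simp [ENNReal.inv_mul_cancel (Nat.cast_ne_zero.2 hn.ne')]⟩

theorem isCoupling_matchingCoupling (x y : Fin n → X) (σ : Equiv.Perm (Fin n)) :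
    IsCoupling (matchingCoupling x y σ) (empiricalMeasure n x) (empiricalMeasure n y) := by
  simp only [IsCoupling, matchingCoupling, empiricalMeasure, Measure.map_smul,
    Measure.map_finset_sum' measurable_fst.aemeasurable,
    Measure.map_finset_sum' measurable_snd.aemeasurable,
    Measure.map_dirac' measurable_fst, Measure.map_dirac' measurable_snd,
    Equiv.sum_comp σ fun i => Measure.dirac (y i), and_self]

variable [MeasurableSingletonClass X]

theorem lintegral_matchingCoupling (c : X × X → ℝ≥0∞) (x y : Fin n → X)
    (σ : Equiv.Perm (Fin n)) :
    ∫⁻ z, c z ∂matchingCoupling x y σ = (n : ℝ≥0∞)⁻¹ * ∑ i, c (x i, y (σ i)) := by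
  simp [matchingCoupling, lintegral_smul_measure, lintegral_finsetSum_measure]

variable {x y : Fin n → X} {γ : Measure (X × X)}

open scoped Classical in
theorem IsCoupling.sum_measure_singleton_right
    (hγ : IsCoupling γ (empiricalMeasure n x) (empiricalMeasure n y)) (a : X) :
    ∑ b ∈ univ.image y, γ {(a, b)} = (n : ℝ≥0∞)⁻¹ * #{i | x i = a} := by
  have hnull : γ (Prod.snd ⁻¹' ↑(univ.image y))ᶜ = 0 := by
    rw [← Set.preimage_compl,
      ← Measure.map_apply measurable_snd (univ.image y).measurableSet.compl, hγ.2,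
      empiricalMeasure_apply y (univ.image y).measurableSet.compl]
    simp
  have hfiber : ∀ b, γ {(a, b)} = γ.restrict (Prod.fst ⁻¹' {a}) (Prod.snd ⁻¹' {b}) := fun b => by
    rw [Measure.restrict_apply (measurable_snd (measurableSet_singleton b))]
    congr 1
    ext ⟨u, v⟩
    simp [and_comm]
  rw [sum_congr rfl fun b _ => hfiber b, sum_measure_preimage_singleton _
      fun b _ => measurable_snd (measurableSet_singleton b),
    Measure.restrict_apply (measurable_snd (univ.image y).measurableSet), Set.inter_comm,
    measure_inter_conull hnull, ← Measure.map_apply measurable_fst (measurableSet_singleton a),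
    hγ.1, empiricalMeasure_apply x (measurableSet_singleton a)]
  rfl

theorem IsCoupling.exists_perm_le_lintegral (hn : 0 < n) {c : X × X → ℝ≥0∞}
    (hc : ∀ z, c z ≠ ∞) (hγ : IsCoupling γ (empiricalMeasure n x) (empiricalMeasure n y)) :
    ∃ σ : Equiv.Perm (Fin n), (n : ℝ≥0∞)⁻¹ * ∑ i, c (x i, y (σ i)) ≤ ∫⁻ z, c z ∂γ := by
  classical
  have hn₀ : (n : ℝ≥0∞) ≠ 0 := Nat.cast_ne_zero.2 hn.ne'
  have := isProbabilityMeasure_empiricalMeasure hn x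
  have := hγ.isProbabilityMeasure
  -- rescaled by `n`, the atoms of `γ` have the sample multiplicities as marginals
  set q : X → X → ℝ := fun a b => n * (γ {(a, b)}).toReal
  have hmarginal : ∀ (S : Finset X) (m : X → ℝ≥0∞) (k : ℕ), (∀ b, m b ≠ ∞) →
      ∑ b ∈ S, m b = (n : ℝ≥0∞)⁻¹ * k → ∑ b ∈ S, n * (m b).toReal = k := by
    intro S m k hm h
    rw [← mul_sum, ← toReal_sum fun b _ => hm b, h, toReal_mul, toReal_inv, toReal_natCast,
      toReal_natCast, ← mul_assoc, mul_inv_cancel₀ (Nat.cast_ne_zero.2 hn.ne'), one_mul]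
  have hswap : ∀ a b, γ.map Prod.swap {(b, a)} = γ {(a, b)} := fun a b => by
    rw [Measure.map_apply measurable_swap (measurableSet_singleton _)]
    congr 1
    ext ⟨u, v⟩
    simp [and_comm]
  obtain ⟨σ, hσ⟩ := exists_perm_sum_le_of_marginals x y q (fun a b => by positivity)
    (fun i => hmarginal _ _ _ (fun b => measure_ne_top _ _) (hγ.sum_measure_singleton_right _))
    (fun j => hmarginal _ _ _ (fun a => measure_ne_top _ _)
      (by simpa only [hswap] using hγ.swap.sum_measure_singleton_right (y j)))
    (fun a b => (c (a, b)).toReal)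
  set S := univ.image x ×ˢ univ.image y
  have hcost : ∑ a ∈ univ.image x, ∑ b ∈ univ.image y, (c (a, b)).toReal * q a b =
      n * (∑ z ∈ S, c z * γ {z}).toReal := by
    rw [toReal_sum fun z _ => mul_ne_top (hc z) (measure_ne_top _ _), mul_sum, sum_product]
    simp only [q, toReal_mul]
    exact sum_congr rfl fun a _ => sum_congr rfl fun b _ => by ring
  refine ⟨σ, le_trans ?_ ((lintegral_finset S c).symm.trans_le (setLIntegral_le_lintegral _ _))⟩
  rw [ENNReal.inv_mul_le_iff hn₀ (natCast_ne_top n), ← toReal_le_toReal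
    (sum_ne_top.2 fun i _ => hc _) (mul_ne_top (natCast_ne_top n)
      (sum_ne_top.2 fun z _ => mul_ne_top (hc z) (measure_ne_top _ _))),
    toReal_sum fun i _ => hc _, toReal_mul, toReal_natCast, ← hcost]
  exact hσ

theorem transportCost_empiricalMeasure (hn : 0 < n) {c : X × X → ℝ≥0∞} (hc : ∀ z, c z ≠ ∞)
    (x y : Fin n → X) :
    transportCost c (empiricalMeasure n x) (empiricalMeasure n y) = matchingCost c x y := by
  refine le_antisymm (le_iInf fun σ => ?_) (le_iInf₂ fun γ hγ => ?_)
  · exact (transportCost_le_lintegral (isCoupling_matchingCoupling x y σ)).trans_eq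
      (lintegral_matchingCoupling c x y σ)
  · obtain ⟨σ, hσ⟩ := hγ.exists_perm_le_lintegral hn hc
    exact iInf_le_of_le σ hσ

end Empirical

section RandomMatching

variable {Ω : Type*} [MeasurableSpace Ω]

theorem exists_measurable_argmin {ι α : Type*} [Fintype ι] [Nonempty ι] [LinearOrder α]
    [TopologicalSpace α] [OrderClosedTopology α] [SecondCountableTopology α] [MeasurableSpace α]
    [OpensMeasurableSpace α] (f : ι → Ω → α) (hf : ∀ i, Measurable (f i)) :
    ∃ k : Ω → ι, (∀ i, MeasurableSet (k ⁻¹' {i})) ∧ ∀ ω i, f (k ω) ω ≤ f i ω := by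
  classical
  -- breaking ties by the least minimiser keeps the fibres of `k` measurable
  let : LinearOrder ι := LinearOrder.lift' _ (Fintype.equivFin ι).injective
  set argmins : Ω → Finset ι := fun ω => {i | ∀ j, f i ω ≤ f j ω}
  have hne : ∀ ω, (argmins ω).Nonempty := fun ω => by
    obtain ⟨i, -, hi⟩ := exists_min_image univ (f · ω) univ_nonempty
    exact ⟨i, by simpa [argmins] using hi⟩
  have hmeas : ∀ i, MeasurableSet {ω | i ∈ argmins ω} := fun i => by
    simpa [argmins, Set.ofPred_forall] using
      MeasurableSet.iInter fun j => measurableSet_le (hf i) (hf j)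
  refine ⟨fun ω => (argmins ω).min' (hne ω), fun i => ?_, fun ω => ?_⟩
  · have : (fun ω => (argmins ω).min' (hne ω)) ⁻¹' {i} =
        {ω | i ∈ argmins ω} ∩ ⋂ j, ⋂ (_ : j < i), {ω | j ∈ argmins ω}ᶜ := by
      ext ω
      simp only [Set.mem_preimage, Set.mem_singleton_iff, Set.mem_inter_iff, Set.mem_ofPred_eq,
        Set.mem_iInter, Set.mem_compl_iff]
      refine ⟨?_, fun ⟨hi, hmin⟩ => le_antisymm (min'_le _ _ hi) ((le_min'_iff _ _).2
        fun j hj => not_lt.1 fun hji => hmin j hji hj)⟩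
      rintro rfl
      exact ⟨min'_mem _ _, fun j hj hmem => (min'_le _ _ hmem).not_gt hj⟩
    rw [this]
    exact (hmeas i).inter (.iInter fun j => .iInter fun _ => (hmeas j).compl)
  · simpa [argmins] using min'_mem _ (hne ω)

theorem sum_restrict_preimage_singleton {ι : Type*} [Fintype ι] (P : Measure Ω) {k : Ω → ι}
    (hk : ∀ i, MeasurableSet (k ⁻¹' {i})) :
    ∑ i, P.restrict (k ⁻¹' {i}) = P := by
  ext s hs
  rw [Measure.finsetSum_apply]
  simp_rw [Measure.restrict_apply hs, Set.inter_comm s, ← Measure.restrict_apply (hk _)]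
  rw [sum_measure_preimage_singleton _ fun i _ => hk i, coe_univ, Set.preimage_univ,
    Measure.restrict_apply_univ]

variable {X : Type*} [MeasurableSpace X] {n : ℕ} {P : Measure Ω}
  {Q : Equiv.Perm (Fin n) → Measure Ω} {Y Z : Fin n → Ω → X}

theorem sum_smul_sum_map_eq (hn : 0 < n) (hQ : ∑ σ, Q σ = P) {V : Fin n → Ω → X}
    (hV : ∀ i, Measurable (V i)) {μ : Measure X} (hlaw : ∀ i, P.map (V i) = μ) :
    ∑ σ, (n : ℝ≥0∞)⁻¹ • ∑ i, (Q σ).map (V i) = μ := by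
  rw [← smul_sum, sum_comm]
  simp_rw [← Measure.map_finset_sum' (hV _).aemeasurable, hQ, hlaw, sum_const, card_univ,
    Fintype.card_fin, ← Nat.cast_smul_eq_nsmul ℝ≥0∞, smul_smul,
    ENNReal.inv_mul_cancel (Nat.cast_ne_zero.2 hn.ne') (natCast_ne_top n), one_smul]

theorem isCoupling_randomMatchingCoupling (hn : 0 < n) (hQ : ∑ σ, Q σ = P)
    (hY : ∀ i, Measurable (Y i)) (hZ : ∀ i, Measurable (Z i)) {μ ν : Measure X}
    (hYlaw : ∀ i, P.map (Y i) = μ) (hZlaw : ∀ i, P.map (Z i) = ν) :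
    IsCoupling (randomMatchingCoupling Q Y Z) μ ν := by
  simp only [IsCoupling, randomMatchingCoupling,
    Measure.map_finset_sum' measurable_fst.aemeasurable,
    Measure.map_finset_sum' measurable_snd.aemeasurable, Measure.map_smul,
    Measure.map_map measurable_fst ((hY _).prodMk (hZ _)),
    Measure.map_map measurable_snd ((hY _).prodMk (hZ _))]
  refine ⟨sum_smul_sum_map_eq hn hQ hY hYlaw, ?_⟩
  refine (sum_congr rfl fun σ _ => ?_).trans (sum_smul_sum_map_eq hn hQ hZ hZlaw)
  exact congrArg _ (Equiv.sum_comp σ fun i => (Q σ).map (Z i))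

theorem lintegral_randomMatchingCoupling {c : X × X → ℝ≥0∞} (hc : Measurable c)
    (hY : ∀ i, Measurable (Y i)) (hZ : ∀ i, Measurable (Z i)) :
    ∫⁻ z, c z ∂randomMatchingCoupling Q Y Z =
      ∑ σ, ∫⁻ ω, (n : ℝ≥0∞)⁻¹ * ∑ i, c (Y i ω, Z (σ i) ω) ∂Q σ := by
  simp_rw [randomMatchingCoupling, lintegral_finsetSum_measure, lintegral_smul_measure,
    lintegral_finsetSum_measure, lintegral_map hc ((hY _).prodMk (hZ _))]
  refine sum_congr rfl fun σ _ => ?_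
  have hmeas : ∀ i, Measurable fun ω => c (Y i ω, Z (σ i) ω) := fun i =>
    hc.comp ((hY i).prodMk (hZ (σ i)))
  rw [smul_eq_mul, lintegral_const_mul _ (Finset.measurable_sum _ fun i _ => hmeas i),
    lintegral_finsetSum _ fun i _ => hmeas i]

theorem measurable_matchingCost {c : X × X → ℝ≥0∞} (hc : Measurable c)
    (hY : ∀ i, Measurable (Y i)) (hZ : ∀ i, Measurable (Z i)) :
    Measurable fun ω => matchingCost c (fun i => Y i ω) (fun i => Z i ω) :=
  .iInf fun σ => (Finset.measurable_sum _ fun i _ =>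
    hc.comp ((hY i).prodMk (hZ (σ i)))).const_mul _

theorem transportCost_le_lintegral_matchingCost (hn : 0 < n) {c : X × X → ℝ≥0∞}
    (hc : Measurable c) (hY : ∀ i, Measurable (Y i)) (hZ : ∀ i, Measurable (Z i))
    {μ ν : Measure X} (hYlaw : ∀ i, P.map (Y i) = μ) (hZlaw : ∀ i, P.map (Z i) = ν) :
    transportCost c μ ν ≤ ∫⁻ ω, matchingCost c (fun i => Y i ω) (fun i => Z i ω) ∂P := by
  set cost : Equiv.Perm (Fin n) → Ω → ℝ≥0∞ :=
    fun σ ω => (n : ℝ≥0∞)⁻¹ * ∑ i, c (Y i ω, Z (σ i) ω)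
  obtain ⟨k, hk, hkmin⟩ := exists_measurable_argmin cost fun σ =>
    (Finset.measurable_sum _ fun i _ => hc.comp ((hY i).prodMk (hZ (σ i)))).const_mul _
  have hQ := sum_restrict_preimage_singleton P hk
  have hk_eq : ∀ σ, ∀ ω ∈ k ⁻¹' {σ},
      cost σ ω = matchingCost c (fun i => Y i ω) (fun i => Z i ω) := by
    rintro σ ω rfl
    exact le_antisymm (le_iInf (hkmin ω)) (iInf_le _ _)
  calc transportCost c μ ν
      ≤ ∫⁻ z, c z ∂randomMatchingCoupling (fun σ => P.restrict (k ⁻¹' {σ})) Y Z :=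
        transportCost_le_lintegral (isCoupling_randomMatchingCoupling hn hQ hY hZ hYlaw hZlaw)
    _ = ∑ σ, ∫⁻ ω in k ⁻¹' {σ}, cost σ ω ∂P := lintegral_randomMatchingCoupling hc hY hZ
    _ = ∑ σ, ∫⁻ ω in k ⁻¹' {σ}, matchingCost c (fun i => Y i ω) (fun i => Z i ω) ∂P :=
        sum_congr rfl fun σ _ => setLIntegral_congr_fun (hk σ) (hk_eq σ)
    _ = ∫⁻ ω, matchingCost c (fun i => Y i ω) (fun i => Z i ω) ∂P := by
        rw [← lintegral_finsetSum_measure, hQ]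

end RandomMatching

section Moments

variable {X Ω : Type*} [PseudoMetricSpace X] [MeasurableSpace X] [OpensMeasurableSpace X]
  [MeasurableSpace Ω] {P : Measure Ω} [IsFiniteMeasure P] {p : ℝ}

theorem lintegral_edist_rpow_lt_top (hp : 1 ≤ p) {U V : Ω → X} (hU : Measurable U) (x₀ x₁ : X)
    (hU_mom : ∫⁻ ω, edist x₀ (U ω) ^ p ∂P < ∞) (hV_mom : ∫⁻ ω, edist x₁ (V ω) ^ p ∂P < ∞) :
    ∫⁻ ω, edist (U ω) (V ω) ^ p ∂P < ∞ := by
  have hp₀ : 0 ≤ p := by linarith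
  have hconst : ∫⁻ _, edist x₀ x₁ ^ p ∂P < ∞ := by
    rw [lintegral_const]
    exact mul_lt_top (rpow_lt_top_of_nonneg hp₀ (edist_ne_top _ _)) (measure_lt_top P _)
  have hV_mom₀ : ∫⁻ ω, edist x₀ (V ω) ^ p ∂P < ∞ :=
    (lintegral_mono fun ω => rpow_le_rpow (edist_triangle x₀ x₁ (V ω)) hp₀).trans_lt
      (lintegral_rpow_add_lt_top_of_lintegral_rpow_lt_top aemeasurable_const hconst hV_mom hp)
  refine (lintegral_mono fun ω => rpow_le_rpow ?_ hp₀).trans_lt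
    (lintegral_rpow_add_lt_top_of_lintegral_rpow_lt_top
      (measurable_edist_right.comp hU).aemeasurable hU_mom hV_mom₀ hp)
  exact (edist_triangle (U ω) x₀ (V ω)).trans_eq (by rw [edist_comm]; rfl)

theorem lintegral_matchingCost_lt_top [SecondCountableTopology X] (hp : 1 ≤ p) {n : ℕ}
    (hn : 0 < n) {Y Z : Fin n → Ω → X} (hY : ∀ i, Measurable (Y i))
    (hZ : ∀ i, Measurable (Z i)) {μ ν : Measure X} (hYlaw : ∀ i, P.map (Y i) = μ)
    (hZlaw : ∀ i, P.map (Z i) = ν) (hμ : ∃ x₀ : X, ∫⁻ x, edist x₀ x ^ p ∂μ < ∞)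
    (hν : ∃ x₀ : X, ∫⁻ x, edist x₀ x ^ p ∂ν < ∞) :
    ∫⁻ ω, matchingCost (fun z => edist z.1 z.2 ^ p) (fun i => Y i ω) (fun i => Z i ω) ∂P < ∞ := by
  obtain ⟨x₀, hx₀⟩ := hμ
  obtain ⟨x₁, hx₁⟩ := hν
  have hmom : ∀ {V : Ω → X} {x : X} {m : Measure X}, Measurable V → P.map V = m →
      ∫⁻ x', edist x x' ^ p ∂m < ∞ → ∫⁻ ω, edist x (V ω) ^ p ∂P < ∞ := fun hV hVlaw h => by
    rwa [← lintegral_map (measurable_edist_right.pow_const p) hV, hVlaw]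
  have hpair : ∀ i, ∫⁻ ω, edist (Y i ω) (Z i ω) ^ p ∂P < ∞ := fun i =>
    lintegral_edist_rpow_lt_top hp (hY i) x₀ x₁ (hmom (hY i) (hYlaw i) hx₀)
      (hmom (hZ i) (hZlaw i) hx₁)
  refine (lintegral_mono fun ω => matchingCost_le_sum _ _ _).trans_lt ?_
  rw [lintegral_const_mul' _ _ (by simp [hn.ne']), lintegral_finsetSum _ fun i _ =>
    ((hY i).edist (hZ i)).pow_const p]
  exact mul_lt_top (by simpa using hn) (sum_lt_top.2 fun i _ => hpair i)

end Moments

theorem wasserstein_pow_le_expected_empirical_general {X : Type*} [MetricSpace X]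
    [TopologicalSpace.SeparableSpace X] [MeasurableSpace X] [BorelSpace X]
    (p : ℝ) (hp : 1 ≤ p)
    {Ω : Type*} [MeasurableSpace Ω] (P : Measure Ω) [IsProbabilityMeasure P]
    (n : ℕ) (hn : 0 < n)
    (Y Z : Fin n → Ω → X)
    (hYmeas : ∀ i, Measurable (Y i)) (hZmeas : ∀ i, Measurable (Z i))
    (μ ν : Measure X)
    (hμmom : ∃ x₀ : X, ∫⁻ x, edist x₀ x ^ p ∂μ < ⊤)
    (hνmom : ∃ x₀ : X, ∫⁻ x, edist x₀ x ^ p ∂ν < ⊤)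
    -- i.i.d. samples from μ and from ν, mutually independent
    (hYlaw : ∀ i, P.map (Y i) = μ) (hZlaw : ∀ i, P.map (Z i) = ν) :
    wasserstein p μ ν ^ p ≤
      ∫ ω, wasserstein p (empiricalMeasure n fun i => Y i ω)
          (empiricalMeasure n fun i => Z i ω) ^ p ∂P := by
  have : SecondCountableTopology X := UniformSpace.secondCountable_of_separable X
  have hp₀ : 0 < p := by linarith
  set c : X × X → ℝ≥0∞ := fun z => edist z.1 z.2 ^ p
  have hc : Measurable c := measurable_edist.pow_const p
  have hc_top : ∀ z, c z ≠ ∞ := fun z => rpow_ne_top_of_nonneg hp₀.le (edist_ne_top _ _)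
  have hW : ∀ m m' : Measure X, wasserstein p m m' ^ p = (transportCost c m m').toReal :=
    fun m m' => by rw [wasserstein, toReal_rpow, wassersteinEnn_rpow hp₀]
  have hfin := lintegral_matchingCost_lt_top hp hn hYmeas hZmeas hYlaw hZlaw hμmom hνmom
  simp_rw [hW, transportCost_empiricalMeasure hn hc_top]
  rw [integral_toReal (measurable_matchingCost hc hYmeas hZmeas).aemeasurable
    (ae_lt_top (measurable_matchingCost hc hYmeas hZmeas) hfin.ne)]
  exact toReal_mono hfin.ne
    (transportCost_le_lintegral_matchingCost hn hc hYmeas hZmeas hYlaw hZlaw)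

/-- W_p^p(μ, ν) ≤ E[W_p^p(μₙ, νₙ)] for independent i.i.d. samples from μ and ν. -/
theorem wasserstein_pow_le_expected_empirical {X : Type*} [MetricSpace X] [CompleteSpace X]
    [TopologicalSpace.SeparableSpace X] [MeasurableSpace X] [BorelSpace X]
    (p : ℝ) (hp : 1 ≤ p)
    {Ω : Type*} [MeasurableSpace Ω] (P : Measure Ω) [IsProbabilityMeasure P]
    (n : ℕ) (hn : 0 < n)
    (Y Z : Fin n → Ω → X)
    (hYmeas : ∀ i, Measurable (Y i)) (hZmeas : ∀ i, Measurable (Z i))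
    (μ ν : Measure X) [IsProbabilityMeasure μ] [IsProbabilityMeasure ν]
    (hμmom : ∃ x₀ : X, ∫⁻ x, edist x₀ x ^ p ∂μ < ⊤)
    (hνmom : ∃ x₀ : X, ∫⁻ x, edist x₀ x ^ p ∂ν < ⊤)
    -- i.i.d. samples from μ and from ν, mutually independent
    (hYlaw : ∀ i, P.map (Y i) = μ) (hZlaw : ∀ i, P.map (Z i) = ν)
    (hYindep : iIndepFun Y P)
    (hZindep : iIndepFun Z P)
    (hindep : IndepFun (fun ω i => Y i ω) (fun ω i => Z i ω) P) :
    wasserstein p μ ν ^ p ≤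
      ∫ ω, wasserstein p (empiricalMeasure n fun i => Y i ω)
          (empiricalMeasure n fun i => Z i ω) ^ p ∂P :=
  wasserstein_pow_le_expected_empirical_general p hp P n hn Y Z hYmeas hZmeas μ ν hμmom hνmom hYlaw
    hZlaw
end
end

section
/- Let (X, d) be a metric space, m ≥ 1, and let a ≤ b be real numbers. Define f : X^m × X^m → ℝ by f(y₁,…,y_m, z₁,…,z_m) = min over permutations σ of {1,…,m} of (1/m) ∑_{i=1}^m d(yᵢ, z_{σ(i)}), the optimal assignment cost. If all pairwise distances d(yᵢ, z_j) involved lie in [a, b] (for both the original and the modified point), then f has the bounded differences property with constant (b − a)/m in each coordinate: changing any single argument yᵢ (or z_j) to another point yᵢ′ (with d(yᵢ′, z_j) ∈ [a,b] for all j) changes the value of f by at most (b − a)/m. -/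
open MeasureTheory ProbabilityTheory

noncomputable section

/-- The optimal assignment cost between two lists of m points in a metric space:
min over permutations σ of (1/m) ∑ᵢ d(yᵢ, z_{σ(i)}). -/
def assignmentCost {X : Type*} [MetricSpace X] (m : ℕ) (y z : Fin m → X) : ℝ :=
  ⨅ σ : Equiv.Perm (Fin m), (m : ℝ)⁻¹ * ∑ i, dist (y i) (z (σ i))

lemma abs_ciInf_sub_ciInf_le {ι : Type*} [Finite ι] [Nonempty ι] (f g : ι → ℝ) (c : ℝ)
    (h : ∀ i, |f i - g i| ≤ c) : |(⨅ i, f i) - ⨅ i, g i| ≤ c := by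
  have hbf : BddBelow (Set.range f) := (Set.finite_range f).bddBelow
  have hbg : BddBelow (Set.range g) := (Set.finite_range g).bddBelow
  rw [abs_sub_le_iff]
  constructor
  · obtain ⟨i, hi⟩ := exists_eq_ciInf_of_finite (f := g)
    have h1 : (⨅ i, f i) ≤ f i := ciInf_le hbf i
    have h2 : f i - g i ≤ c := (abs_le.mp (h i)).2
    linarith [hi.symm]
  · obtain ⟨i, hi⟩ := exists_eq_ciInf_of_finite (f := f)
    have h1 : (⨅ i, g i) ≤ g i := ciInf_le hbg i
    have h2 : g i - f i ≤ c := by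
      have := (abs_le.mp (h i)).1; linarith
    linarith [hi.symm]

/-- the optimal assignment cost has the bounded differences property with
constant (b - a)/m in each coordinate, provided all relevant pairwise distances lie
in [a, b].  Changing a single yᵢ (or a single z_j) changes the value by at most (b-a)/m. -/
theorem assignmentCost_bounded_differences {X : Type*} [MetricSpace X]
    (m : ℕ) (hm : 1 ≤ m) (a b : ℝ) (hab : a ≤ b) (y z : Fin m → X) :
    (∀ (i₀ : Fin m) (y' : Fin m → X),
      (∀ j, j ≠ i₀ → y' j = y j) →
      (∀ i j, dist (y i) (z j) ∈ Set.Icc a b) →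
      (∀ j, dist (y' i₀) (z j) ∈ Set.Icc a b) →
      |assignmentCost m y' z - assignmentCost m y z| ≤ (b - a) / m) ∧
    (∀ (j₀ : Fin m) (z' : Fin m → X),
      (∀ j, j ≠ j₀ → z' j = z j) →
      (∀ i j, dist (y i) (z j) ∈ Set.Icc a b) →
      (∀ i, dist (y i) (z' j₀) ∈ Set.Icc a b) →
      |assignmentCost m y z' - assignmentCost m y z| ≤ (b - a) / m) := by
  have hm0 : (0:ℝ) < m := by exact_mod_cast hm
  have hinv : (0:ℝ) ≤ (m : ℝ)⁻¹ := by positivity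
  constructor
  · intro i₀ y' hy' hyz hy'z
    apply abs_ciInf_sub_ciInf_le
    intro σ
    rw [← mul_sub, abs_mul, abs_of_nonneg hinv]
    have hsum : (∑ i, dist (y' i) (z (σ i))) - ∑ i, dist (y i) (z (σ i))
        = dist (y' i₀) (z (σ i₀)) - dist (y i₀) (z (σ i₀)) := by
      rw [← Finset.sum_sub_distrib]
      rw [Finset.sum_eq_single i₀]
      · intro j _ hj
        rw [hy' j hj, sub_self]
      · intro h; exact absurd (Finset.mem_univ i₀) h
    rw [hsum]
    have h1 := hy'z (σ i₀)
    have h2 := hyz i₀ (σ i₀)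
    have habs : |dist (y' i₀) (z (σ i₀)) - dist (y i₀) (z (σ i₀))| ≤ b - a := by
      rw [abs_sub_le_iff]
      constructor <;> [linarith [h1.2, h2.1]; linarith [h1.1, h2.2]]
    calc (m:ℝ)⁻¹ * |dist (y' i₀) (z (σ i₀)) - dist (y i₀) (z (σ i₀))|
        ≤ (m:ℝ)⁻¹ * (b - a) := by gcongr
      _ = (b - a) / m := by ring
  · intro j₀ z' hz' hyz hyz'
    apply abs_ciInf_sub_ciInf_le
    intro σ
    rw [← mul_sub, abs_mul, abs_of_nonneg hinv]
    set i₀ := σ.symm j₀ with hi₀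
    have hσi₀ : σ i₀ = j₀ := σ.apply_symm_apply j₀
    have hsum : (∑ i, dist (y i) (z' (σ i))) - ∑ i, dist (y i) (z (σ i))
        = dist (y i₀) (z' (σ i₀)) - dist (y i₀) (z (σ i₀)) := by
      rw [← Finset.sum_sub_distrib]
      rw [Finset.sum_eq_single i₀]
      · intro j _ hj
        have : σ j ≠ j₀ := fun h => hj (by rw [hi₀, ← h, Equiv.symm_apply_apply])
        rw [hz' (σ j) this, sub_self]
      · intro h; exact absurd (Finset.mem_univ i₀) h
    rw [hsum, hσi₀]
    have h1 := hyz' i₀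
    have h2 := hyz i₀ j₀
    have habs : |dist (y i₀) (z' j₀) - dist (y i₀) (z j₀)| ≤ b - a := by
      rw [abs_sub_le_iff]
      constructor <;> [linarith [h1.2, h2.1]; linarith [h1.1, h2.2]]
    calc (m:ℝ)⁻¹ * |dist (y i₀) (z' j₀) - dist (y i₀) (z j₀)|
        ≤ (m:ℝ)⁻¹ * (b - a) := by gcongr
      _ = (b - a) / m := by ring
end
end
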